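/- (Chung–Yao criterion) Let S ⊆ ℝ^n be a set of size dim ℝ[x]_{≤d} = binom(n+d, n). Suppose that for every x ∈ S there exist hyperplanes H_{x,1}, …, H_{x,d} such that S ∩ (H_{x,1} ∪ ⋯ ∪ H_{x,d}) = S ∖ {x}. Then S is minimal unisolvent for ℝ[x]_{≤d}, i.e., the only polynomial of degree at most d vanishing on S is the zero polynomial. -/
import Mathlib


open MvPolynomial BigOperators

/-- Functions `Fin n → ℕ` with sum at most `d` are equivalent to functions
`Fin (n+1) → ℕ` with sum exactly `d` (slack variable). -/
def sumLeEquivSumEq (n d : ℕ) :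
    {f : Fin n → ℕ // ∑ i, f i ≤ d} ≃ {g : Fin (n + 1) → ℕ // ∑ i, g i = d} where
  toFun f := ⟨Fin.cons (d - ∑ i, f.1 i) f.1, by
    have hf := f.2
    rw [Fin.sum_cons]
    omega⟩
  invFun g := ⟨fun i => g.1 i.succ, by
    have hg := g.2
    rw [Fin.sum_univ_succ] at hg
    have : ∑ i : Fin n, g.1 i.succ ≤ d := by omega
    exact this⟩
  left_inv f := by
    ext i
    simp
  right_inv g := by
    ext i
    refine Fin.cases ?_ (fun j => ?_) i
    · have hg := g.2
      rw [Fin.sum_univ_succ] at hg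
      simp
      omega
    · simp

/-- Monomials in `n` variables of degree at most `d` correspond to multisets of size `d`
over `Fin (n+1)`. -/
noncomputable def monomialsEquiv (n d : ℕ) :
    {f : Fin n →₀ ℕ // (f.sum fun _ e => e) ≤ d} ≃ Sym (Fin (n + 1)) d :=
  ((Finsupp.equivFunOnFinite.subtypeEquiv (fun f => by
      rw [Finsupp.sum_fintype _ _ (fun _ => rfl)]
      rfl)).trans (sumLeEquivSumEq n d)).trans
    (Sym.equivNatSumOfFintype (Fin (n + 1)) d).symm

lemma card_monomials (n d : ℕ) :
    Nat.card {f : Fin n →₀ ℕ // (f.sum fun _ e => e) ≤ d} = (n + d).choose n := by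
  rw [Nat.card_congr (monomialsEquiv n d), Nat.card_eq_fintype_card,
    Sym.card_sym_fin_eq_multichoose, Nat.multichoose_eq,
    show n + 1 + d - 1 = n + d by omega,
    ← Nat.choose_symm (Nat.le_add_left d n), Nat.add_sub_cancel]

lemma finrank_restrictTotalDegree (n d : ℕ) :
    Module.finrank ℝ (restrictTotalDegree (Fin n) ℝ d) = (n + d).choose n := by
  haveI : Finite {m : Fin n →₀ ℕ | (m.sum fun _ e => e) ≤ d} :=
    Finite.of_equiv _ (monomialsEquiv n d).symm
  haveI : Fintype {m : Fin n →₀ ℕ | (m.sum fun _ e => e) ≤ d} := Fintype.ofFinite _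
  rw [show restrictTotalDegree (Fin n) ℝ d
      = restrictSupport ℝ {m : Fin n →₀ ℕ | (m.sum fun _ e => e) ≤ d} from rfl,
    Module.finrank_eq_card_basis
      (basisRestrictSupport ℝ {m : Fin n →₀ ℕ | (m.sum fun _ e => e) ≤ d}),
    ← Nat.card_eq_fintype_card]
  exact card_monomials n d

/-- Evaluation of polynomials of degree at most `d` at the points of `S`. -/
noncomputable def evalMap {n d : ℕ} (S : Finset (Fin n → ℝ)) :
    restrictTotalDegree (Fin n) ℝ d →ₗ[ℝ] (S → ℝ) where
  toFun q y := eval (y : Fin n → ℝ) (q : MvPolynomial (Fin n) ℝ)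
  map_add' q r := by funext y; simp
  map_smul' r q := by funext y; simp [MvPolynomial.smul_eval]

@[simp] lemma evalMap_apply {n d : ℕ} (S : Finset (Fin n → ℝ))
    (q : restrictTotalDegree (Fin n) ℝ d) (y : S) :
    evalMap S q y = eval (y : Fin n → ℝ) (q : MvPolynomial (Fin n) ℝ) := rfl

set_option maxHeartbeats 2000000 in
/-- Chung–Yao criterion: let `S ⊆ ℝ^n` have size `dim ℝ[x]_{≤d} = binom(n+d, n)`, and
suppose that for every `x ∈ S` there are `d` hyperplanes (zero sets of nonzero affine
functionals) whose union meets `S` exactly in `S ∖ {x}`. Then `S` is minimal unisolvent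
for the polynomials of degree at most `d`: the only such polynomial vanishing on `S` is
zero. -/
theorem stmt_9 {n d : ℕ} (S : Finset (Fin n → ℝ))
    (hcard : S.card = (n + d).choose n)
    (hCY : ∀ x ∈ S, ∃ (w : Fin d → (Fin n → ℝ)) (c : Fin d → ℝ),
      (∀ l, w l ≠ 0) ∧
      ∀ y ∈ S, (y ≠ x ↔ ∃ l, (∑ i, w l i * y i) + c l = 0)) :
    ∀ p : MvPolynomial (Fin n) ℝ, p.totalDegree ≤ d →
      (∀ x ∈ S, MvPolynomial.eval x p = 0) → p = 0 := by
  classical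
  -- finrank equalities
  have hfr : Module.finrank ℝ (restrictTotalDegree (Fin n) ℝ d)
      = Module.finrank ℝ (S → ℝ) := by
    rw [finrank_restrictTotalDegree, Module.finrank_pi, Fintype.card_coe, hcard]
  -- surjectivity
  have hsurj : Function.Surjective (evalMap (d := d) S) := by
    rw [← LinearMap.range_eq_top, ← top_le_iff, ← (Pi.basisFun ℝ S).span_eq, Submodule.span_le]
    rintro f ⟨x, rfl⟩
    obtain ⟨w, c, -, hwc⟩ := hCY x x.2
    -- the Lagrange-type polynomial
    set Q : MvPolynomial (Fin n) ℝ := ∏ l : Fin d, ((∑ i, C (w l i) * X i) + C (c l)) with hQ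
    have hdeg : Q.totalDegree ≤ d := by
      calc Q.totalDegree ≤ ∑ l : Fin d, ((∑ i, C (w l i) * X i) + C (c l)).totalDegree :=
            totalDegree_finset_prod _ _
        _ ≤ ∑ _l : Fin d, 1 := by
            refine Finset.sum_le_sum fun l _ => ?_
            refine (totalDegree_add _ _).trans ?_
            refine max_le ?_ (by simp [totalDegree_C])
            refine (totalDegree_finset_sum _ _).trans ?_
            refine Finset.sup_le fun i _ => ?_
            refine (totalDegree_mul _ _).trans ?_
            simp [totalDegree_C, totalDegree_X]
        _ = d := by simp
    have hQmem : Q ∈ restrictTotalDegree (Fin n) ℝ d :=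
      (mem_restrictTotalDegree _ _ _).mpr hdeg
    have hevalQ : ∀ y : Fin n → ℝ, eval y Q = ∏ l : Fin d, ((∑ i, w l i * y i) + c l) := by
      intro y
      rw [hQ, eval_prod]
      refine Finset.prod_congr rfl fun l _ => ?_
      simp
    have hx : eval (x : Fin n → ℝ) Q ≠ 0 := by
      rw [hevalQ]
      refine Finset.prod_ne_zero_iff.mpr fun l _ hl => ?_
      exact absurd ((hwc x x.2).mpr ⟨l, hl⟩) (by simp)
    have hvanish : ∀ y : S, (y : Fin n → ℝ) ≠ (x : Fin n → ℝ) →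
        eval (y : Fin n → ℝ) Q = 0 := by
      intro y hy
      rw [hevalQ]
      obtain ⟨l, hl⟩ := (hwc y y.2).mp hy
      exact Finset.prod_eq_zero (Finset.mem_univ l) hl
    -- the basis vector is a scalar multiple of the image of Q
    have hbas : Pi.basisFun ℝ S x
        = (eval (x : Fin n → ℝ) Q)⁻¹ • evalMap S ⟨Q, hQmem⟩ := by
      funext y
      rw [Pi.smul_apply, evalMap_apply, Pi.basisFun_apply]
      by_cases hyx : y = x
      · subst hyx
        rw [Pi.single_eq_same, smul_eq_mul, inv_mul_cancel₀ hx]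
      · have hne : (y : Fin n → ℝ) ≠ (x : Fin n → ℝ) := fun h => hyx (Subtype.ext h)
        rw [Pi.single_eq_of_ne hyx, hvanish y hne, smul_eq_mul, mul_zero]
    rw [SetLike.mem_coe, hbas]
    exact Submodule.smul_mem _ _ ⟨⟨Q, hQmem⟩, rfl⟩
  have hinj : Function.Injective (evalMap (d := d) S) :=
    (LinearMap.injective_iff_surjective_of_finrank_eq_finrank hfr).mpr hsurj
  intro p hp hvan
  have hpmem : p ∈ restrictTotalDegree (Fin n) ℝ d := (mem_restrictTotalDegree _ _ _).mpr hp
  have h0 : evalMap S ⟨p, hpmem⟩ = evalMap S (0 : restrictTotalDegree (Fin n) ℝ d) := by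
    rw [map_zero]
    funext y
    rw [evalMap_apply]
    exact hvan y y.2
  exact congrArg Subtype.val (hinj h0)
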